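/- Well-formedness of suspension expressions is preserved by the β_s rule, the reading rules, and the merging rules: if x is a well-formed suspension expression and x rewrites to y by any of these rules at any subexpression, then y is well-formed. -/
import Mathlib


/- Terms of the suspension calculus: constants, de Bruijn indices `#i`,
applications, abstractions, and suspensions `[t, ol, nl, e]`. -/
mutual
inductive Tm : Type where
  | const : Nat → Tm
  | idx : Nat → Tm
  | app : Tm → Tm → Tm
  | lam : Tm → Tm
  | susp : Tm → Nat → Nat → Env → Tm
/-- Environments: `nil`, cons cells `(t,n)::e`, and merges `{e1, nl1, ol2, e2}`. -/
inductive Env : Type where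
  | nil : Env
  | econs : Tm → Nat → Env → Env
  | merge : Env → Nat → Nat → Env → Env
end

/-- Length of an environment. -/
def Env.len : Env → Nat
  | .nil => 0
  | .econs _ _ e => 1 + Env.len e
  | .merge e1 nl1 _ e2 => Env.len e1 + (Env.len e2 - nl1)

/-- Level of an environment. -/
def Env.lev : Env → Nat
  | .nil => 0
  | .econs _ l _ => l
  | .merge _ nl1 ol2 e2 => Env.lev e2 + (nl1 - ol2)

/- Well-formedness of suspension expressions. -/
mutual
inductive WfTm : Tm → Prop where
  | const : ∀ c, WfTm (.const c)
  | idx : ∀ i, 1 ≤ i → WfTm (.idx i)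
  | app : ∀ {t1 t2}, WfTm t1 → WfTm t2 → WfTm (.app t1 t2)
  | lam : ∀ {t}, WfTm t → WfTm (.lam t)
  | susp : ∀ {t e} (ol nl : Nat), WfTm t → WfEnv e → Env.len e = ol →
      Env.lev e ≤ nl → WfTm (.susp t ol nl e)
inductive WfEnv : Env → Prop where
  | nil : WfEnv .nil
  | econs : ∀ {t e} (l : Nat), WfTm t → WfEnv e → Env.lev e ≤ l → WfEnv (.econs t l e)
  | merge : ∀ {e1 e2} (nl1 ol2 : Nat), WfEnv e1 → WfEnv e2 → Env.lev e1 ≤ nl1 →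
      Env.len e2 = ol2 → WfEnv (.merge e1 nl1 ol2 e2)
end

/- One-step rewriting by the reading rules (r1)-(r6) and merging rules
(m1)-(m6), applied at any subexpression. -/
mutual
inductive SR : Tm → Tm → Prop where
  | r1 : ∀ c ol nl e, SR (.susp (.const c) ol nl e) (.const c)
  | r2 : ∀ i nl, 1 ≤ i → SR (.susp (.idx i) 0 nl .nil) (.idx (i + nl))
  | r3 : ∀ ol nl t l e, SR (.susp (.idx 1) ol nl (.econs t l e)) (.susp t 0 (nl - l) .nil)
  | r4 : ∀ i ol nl t l e, 1 < i →
      SR (.susp (.idx i) ol nl (.econs t l e)) (.susp (.idx (i - 1)) (ol - 1) nl e)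
  | r5 : ∀ t1 t2 ol nl e,
      SR (.susp (.app t1 t2) ol nl e) (.app (.susp t1 ol nl e) (.susp t2 ol nl e))
  | r6 : ∀ t ol nl e,
      SR (.susp (.lam t) ol nl e)
         (.lam (.susp t (ol + 1) (nl + 1) (.econs (.idx 1) (nl + 1) e)))
  | m1 : ∀ t ol1 nl1 e1 ol2 nl2 e2,
      SR (.susp (.susp t ol1 nl1 e1) ol2 nl2 e2)
         (.susp t (ol1 + (ol2 - nl1)) (nl2 + (nl1 - ol2)) (.merge e1 nl1 ol2 e2))
  | appL : ∀ {t1 t1'} (t2 : Tm), SR t1 t1' → SR (.app t1 t2) (.app t1' t2)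
  | appR : ∀ (t1 : Tm) {t2 t2'}, SR t2 t2' → SR (.app t1 t2) (.app t1 t2')
  | lamC : ∀ {t t'}, SR t t' → SR (.lam t) (.lam t')
  | suspT : ∀ {t t'} ol nl e, SR t t' → SR (.susp t ol nl e) (.susp t' ol nl e)
  | suspE : ∀ t ol nl {e e'}, SRE e e' → SR (.susp t ol nl e) (.susp t ol nl e')
inductive SRE : Env → Env → Prop where
  | m2 : ∀ e1 nl1, SRE (.merge e1 nl1 0 .nil) e1
  | m3 : ∀ ol2 e2, SRE (.merge .nil 0 ol2 e2) e2
  | m4 : ∀ nl1 ol2 t l e2, 1 ≤ nl1 →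
      SRE (.merge .nil nl1 ol2 (.econs t l e2)) (.merge .nil (nl1 - 1) (ol2 - 1) e2)
  | m5 : ∀ t n e1 nl1 ol2 s l e2, n < nl1 →
      SRE (.merge (.econs t n e1) nl1 ol2 (.econs s l e2))
          (.merge (.econs t n e1) (nl1 - 1) (ol2 - 1) e2)
  | m6 : ∀ t n e1 ol2 s l e2,
      SRE (.merge (.econs t n e1) n ol2 (.econs s l e2))
          (.econs (.susp t ol2 l (.econs s l e2)) (l + (n - ol2))
                  (.merge e1 n ol2 (.econs s l e2)))
  | consT : ∀ {t t'} l e, SR t t' → SRE (.econs t l e) (.econs t' l e)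
  | consE : ∀ t l {e e'}, SRE e e' → SRE (.econs t l e) (.econs t l e')
  | mergeL : ∀ {e1 e1'} nl1 ol2 e2, SRE e1 e1' →
      SRE (.merge e1 nl1 ol2 e2) (.merge e1' nl1 ol2 e2)
  | mergeR : ∀ e1 nl1 ol2 {e2 e2'}, SRE e2 e2' →
      SRE (.merge e1 nl1 ol2 e2) (.merge e1 nl1 ol2 e2')
end

/- One-step rewriting by the (β_s) rule together with the reading rules
(r1)-(r6) and merging rules (m1)-(m6), applied at any subexpression. -/
mutual
inductive SF : Tm → Tm → Prop where
  | beta : ∀ t1 t2, SF (.app (.lam t1) t2) (.susp t1 1 0 (.econs t2 0 .nil))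
  | r1 : ∀ c ol nl e, SF (.susp (.const c) ol nl e) (.const c)
  | r2 : ∀ i nl, 1 ≤ i → SF (.susp (.idx i) 0 nl .nil) (.idx (i + nl))
  | r3 : ∀ ol nl t l e, SF (.susp (.idx 1) ol nl (.econs t l e)) (.susp t 0 (nl - l) .nil)
  | r4 : ∀ i ol nl t l e, 1 < i →
      SF (.susp (.idx i) ol nl (.econs t l e)) (.susp (.idx (i - 1)) (ol - 1) nl e)
  | r5 : ∀ t1 t2 ol nl e,
      SF (.susp (.app t1 t2) ol nl e) (.app (.susp t1 ol nl e) (.susp t2 ol nl e))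
  | r6 : ∀ t ol nl e,
      SF (.susp (.lam t) ol nl e)
         (.lam (.susp t (ol + 1) (nl + 1) (.econs (.idx 1) (nl + 1) e)))
  | m1 : ∀ t ol1 nl1 e1 ol2 nl2 e2,
      SF (.susp (.susp t ol1 nl1 e1) ol2 nl2 e2)
         (.susp t (ol1 + (ol2 - nl1)) (nl2 + (nl1 - ol2)) (.merge e1 nl1 ol2 e2))
  | appL : ∀ {t1 t1'} (t2 : Tm), SF t1 t1' → SF (.app t1 t2) (.app t1' t2)
  | appR : ∀ (t1 : Tm) {t2 t2'}, SF t2 t2' → SF (.app t1 t2) (.app t1 t2')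
  | lamC : ∀ {t t'}, SF t t' → SF (.lam t) (.lam t')
  | suspT : ∀ {t t'} ol nl e, SF t t' → SF (.susp t ol nl e) (.susp t' ol nl e)
  | suspE : ∀ t ol nl {e e'}, SFE e e' → SF (.susp t ol nl e) (.susp t ol nl e')
inductive SFE : Env → Env → Prop where
  | m2 : ∀ e1 nl1, SFE (.merge e1 nl1 0 .nil) e1
  | m3 : ∀ ol2 e2, SFE (.merge .nil 0 ol2 e2) e2
  | m4 : ∀ nl1 ol2 t l e2, 1 ≤ nl1 →
      SFE (.merge .nil nl1 ol2 (.econs t l e2)) (.merge .nil (nl1 - 1) (ol2 - 1) e2)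
  | m5 : ∀ t n e1 nl1 ol2 s l e2, n < nl1 →
      SFE (.merge (.econs t n e1) nl1 ol2 (.econs s l e2))
          (.merge (.econs t n e1) (nl1 - 1) (ol2 - 1) e2)
  | m6 : ∀ t n e1 ol2 s l e2,
      SFE (.merge (.econs t n e1) n ol2 (.econs s l e2))
          (.econs (.susp t ol2 l (.econs s l e2)) (l + (n - ol2))
                  (.merge e1 n ol2 (.econs s l e2)))
  | consT : ∀ {t t'} l e, SF t t' → SFE (.econs t l e) (.econs t' l e)
  | consE : ∀ t l {e e'}, SFE e e' → SFE (.econs t l e) (.econs t l e')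
  | mergeL : ∀ {e1 e1'} nl1 ol2 e2, SFE e1 e1' →
      SFE (.merge e1 nl1 ol2 e2) (.merge e1' nl1 ol2 e2)
  | mergeR : ∀ e1 nl1 ol2 {e2 e2'}, SFE e2 e2' →
      SFE (.merge e1 nl1 ol2 e2) (.merge e1 nl1 ol2 e2')
end


mutual
theorem presT : ∀ {t t' : Tm}, SF t t' → WfTm t → WfTm t'
  | _, _, .beta t1 t2, w => by
      cases w with
      | app w1 w2 =>
        cases w1 with
        | lam w1 =>
          exact .susp 1 0 w1 (.econs 0 w2 .nil (Nat.zero_le _)) (by simp [Env.len])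
            (by simp [Env.lev])
  | _, _, .r1 c ol nl e, _ => .const c
  | _, _, .r2 i nl hi, _ => .idx _ (by omega)
  | _, _, .r3 ol nl t l e, w => by
      cases w with
      | susp _ _ wt we hlen hlev =>
        cases we with
        | econs _ wt' we' hle =>
          exact .susp 0 _ wt' .nil (by simp [Env.len]) (by simp [Env.lev])
  | _, _, .r4 i ol nl t l e hi, w => by
      cases w with
      | susp _ _ wt we hlen hlev =>
        cases we with
        | econs _ wt' we' hle =>
          simp [Env.len] at hlen
          simp [Env.lev] at hlev
          exact .susp _ _ (.idx _ (by omega)) we' (by omega) (le_trans hle hlev)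
  | _, _, .r5 t1 t2 ol nl e, w => by
      cases w with
      | susp _ _ wt we hlen hlev =>
        cases wt with
        | app w1 w2 =>
          exact .app (.susp _ _ w1 we hlen hlev) (.susp _ _ w2 we hlen hlev)
  | _, _, .r6 t ol nl e, w => by
      cases w with
      | susp _ _ wt we hlen hlev =>
        cases wt with
        | lam wt =>
          exact .lam (.susp _ _ wt
            (.econs _ (.idx 1 le_rfl) we (by omega))
            (by simp [Env.len]; omega) (by simp [Env.lev]))
  | _, _, .m1 t ol1 nl1 e1 ol2 nl2 e2, w => by
      cases w with
      | susp _ _ wt we hlen hlev =>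
        cases wt with
        | susp _ _ wt' we' hlen' hlev' =>
          exact .susp _ _ wt' (.merge _ _ we' we hlev' hlen)
            (by simp [Env.len]; omega) (by simp [Env.lev]; omega)
  | _, _, .appL t2 h, w => by
      cases w with
      | app w1 w2 => exact .app (presT h w1) w2
  | _, _, .appR t1 h, w => by
      cases w with
      | app w1 w2 => exact .app w1 (presT h w2)
  | _, _, .lamC h, w => by
      cases w with
      | lam w1 => exact .lam (presT h w1)
  | _, _, .suspT ol nl e h, w => by
      cases w with
      | susp _ _ wt we hlen hlev => exact .susp _ _ (presT h wt) we hlen hlev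
  | _, _, .suspE t ol nl h, w => by
      cases w with
      | susp _ _ wt we hlen hlev =>
        obtain ⟨we', hl, hv⟩ := presE h we
        exact .susp _ _ wt we' (by omega) (by omega)

theorem presE : ∀ {e e' : Env}, SFE e e' →
    WfEnv e → WfEnv e' ∧ e'.len = e.len ∧ e'.lev ≤ e.lev
  | _, _, .m2 e1 nl1, w => by
      cases w with
      | merge _ _ w1 w2 hlev hlen =>
        exact ⟨w1, by simp [Env.len], by simp [Env.lev]; omega⟩
  | _, _, .m3 ol2 e2, w => by
      cases w with
      | merge _ _ w1 w2 hlev hlen =>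
        exact ⟨w2, by simp [Env.len], by simp [Env.lev]⟩
  | _, _, .m4 nl1 ol2 t l e2 h1, w => by
      cases w with
      | merge _ _ w1 w2 hlev hlen =>
        cases w2 with
        | econs _ wt we hle =>
          simp [Env.len] at hlen
          refine ⟨.merge _ _ .nil we (Nat.zero_le _) (by omega),
            by simp [Env.len]; omega, by simp [Env.lev]; omega⟩
  | _, _, .m5 t n e1 nl1 ol2 s l e2 h1, w => by
      cases w with
      | merge _ _ w1 w2 hlev hlen =>
        cases w2 with
        | econs _ wt we hle =>
          simp [Env.len] at hlen
          simp [Env.lev] at hlev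
          refine ⟨.merge _ _ w1 we (by simp [Env.lev]; omega) (by omega),
            by simp [Env.len]; omega, by simp [Env.lev]; omega⟩
  | _, _, .m6 t n e1 ol2 s l e2, w => by
      cases w with
      | merge _ _ w1 w2 hlev hlen =>
        cases w1 with
        | econs _ wt1 we1 hle1 =>
          cases w2 with
          | econs _ wt2 we2 hle2 =>
            refine ⟨.econs _ (.susp _ _ wt1 (.econs _ wt2 we2 hle2) hlen (by simp [Env.lev]))
              (.merge _ _ we1 (.econs _ wt2 we2 hle2) hle1 hlen)
              (by simp [Env.lev]),
              by simp [Env.len]; omega, by simp [Env.lev]⟩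
  | _, _, .consT l e h, w => by
      cases w with
      | econs _ wt we hle =>
        exact ⟨.econs _ (presT h wt) we hle, rfl, le_rfl⟩
  | _, _, .consE t l h, w => by
      cases w with
      | econs _ wt we hle =>
        obtain ⟨we', hl, hv⟩ := presE h we
        exact ⟨.econs _ wt we' (le_trans hv hle), by simp [Env.len, hl], le_rfl⟩
  | _, _, .mergeL nl1 ol2 e2 h, w => by
      cases w with
      | merge _ _ w1 w2 hlev hlen =>
        obtain ⟨w1', hl, hv⟩ := presE h w1
        exact ⟨.merge _ _ w1' w2 (le_trans hv hlev) hlen,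
          by simp [Env.len, hl], by simp [Env.lev]⟩
  | _, _, .mergeR e1 nl1 ol2 h, w => by
      cases w with
      | merge _ _ w1 w2 hlev hlen =>
        obtain ⟨w2', hl, hv⟩ := presE h w2
        exact ⟨.merge _ _ w1 w2' hlev (by omega),
          by simp [Env.len]; omega, by simp [Env.lev]; omega⟩
end

/-- the (β_s) rule together with the reading and merging rules
preserves well-formedness of suspension expressions (terms and environments). -/
theorem rewriting_preserves_wellformedness :
    (∀ t t' : Tm, WfTm t → SF t t' → WfTm t') ∧
    (∀ e e' : Env, WfEnv e → SFE e e' → WfEnv e') := by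
  exact ⟨fun t t' w h => presT h w, fun e e' w h => (presE h w).1⟩
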